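/- Let G be a connected, well-covered, locally triangle-free graph with α(G) ≥ 3 that is not a join of two proper subgraphs, and such that every nontrivial connected component of G_v = G \ N_G[v] is in W₂ for every vertex v. Then G itself is in W₂. -/

import Mathlib

open Set

variable {V : Type*}

/-- `S` is an independent set of `G` contained in the vertex subset `W`
(i.e. an independent set of the induced subgraph `G[W]`). -/
def IsIndepOn (G : SimpleGraph V) (W S : Set V) : Prop :=
  S ⊆ W ∧ ∀ ⦃x⦄, x ∈ S → ∀ ⦃y⦄, y ∈ S → ¬ G.Adj x y

/-- `S` is a maximal independent set of the induced subgraph `G[W]`. -/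
def MaxIndepOn (G : SimpleGraph V) (W : Set V) (S : Finset V) : Prop :=
  IsIndepOn G W ↑S ∧ ∀ v ∈ W, v ∉ S → ¬ IsIndepOn G W (insert v ↑S)

/-- The independence number of the induced subgraph `G[W]`. -/
noncomputable def indepNumOn (G : SimpleGraph V) (W : Set V) : ℕ :=
  sSup {n | ∃ S : Finset V, IsIndepOn G W ↑S ∧ S.card = n}

/-- The induced subgraph `G[W]` is well-covered: every maximal independent set
has cardinality equal to the independence number. -/
def WellCoveredOn (G : SimpleGraph V) (W : Set V) : Prop :=
  ∀ S : Finset V, MaxIndepOn G W S → S.card = indepNumOn G W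

/-- The independence number `α(G)`. -/
noncomputable def indepNum (G : SimpleGraph V) : ℕ := indepNumOn G Set.univ

/-- `G` is well-covered. -/
def WellCovered (G : SimpleGraph V) : Prop := WellCoveredOn G Set.univ

/-- The induced subgraph `G[W]` has no isolated vertices. -/
def NoIsolatedOn (G : SimpleGraph V) (W : Set V) : Prop :=
  ∀ v ∈ W, ∃ u ∈ W, G.Adj v u

/-- The induced subgraph `G[W]` is in the class `W₂`: it has no isolated
vertices, is well-covered, and removing any vertex leaves a well-covered graph
with the same independence number. -/
def W2On (G : SimpleGraph V) (W : Set V) : Prop :=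
  NoIsolatedOn G W ∧ WellCoveredOn G W ∧
    ∀ v ∈ W, WellCoveredOn G (W \ {v}) ∧ indepNumOn G (W \ {v}) = indepNumOn G W

/-- `G` is in the class `W₂`. -/
def W2 (G : SimpleGraph V) : Prop := W2On G Set.univ

/-- The closed neighborhood `N_G[S]` of a set of vertices `S`. -/
def nbhd (G : SimpleGraph V) (S : Set V) : Set V :=
  {v | v ∈ S ∨ ∃ u ∈ S, G.Adj u v}

/-- The vertex set of `G_S = G \ N_G[S]`. -/
def GDel (G : SimpleGraph V) (S : Set V) : Set V := Set.univ \ nbhd G S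

/-- The induced subgraph `G[W]` is triangle-free. -/
def TriangleFreeOn (G : SimpleGraph V) (W : Set V) : Prop :=
  ∀ x ∈ W, ∀ y ∈ W, ∀ z ∈ W, ¬ (G.Adj x y ∧ G.Adj y z ∧ G.Adj x z)

/-- `G` is locally triangle-free: `G_v` is triangle-free for every vertex `v`. -/
def LocallyTriangleFree (G : SimpleGraph V) : Prop :=
  ∀ v : V, TriangleFreeOn G (GDel G {v})

/-- `G` is a join of two proper (nonempty, disjoint) subgraphs. -/
def IsJoin (G : SimpleGraph V) : Prop :=
  ∃ V₁ V₂ : Set V, V₁.Nonempty ∧ V₂.Nonempty ∧ Disjoint V₁ V₂ ∧ V₁ ∪ V₂ = Set.univ ∧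
    ∀ x ∈ V₁, ∀ y ∈ V₂, G.Adj x y

/-!
Since `G` is well-covered, `G - v` can only fail the `W₂` condition through a maximal
independent set `D` of `G_v` that dominates `N(v)`; then `D ∪ {v}` is maximal in `G`, so
`|D| ≥ 2`. Every vertex of a `W₂` graph is a shedding vertex, and using this in the component
of `G_s` that contains `x` shows that an independent set of `G_x` dominating `N(x)` is complete
to `N(x)`. Hence `D` is complete to `N(v)`. As `G` is not a join, some `w ∈ G_v` misses a
neighbour of `v`, and then `w` is adjacent to every vertex of `G_v` complete to `N(v)`, in
particular to all of `D`. For `d ∈ D`, the same fact at `x = d` applied to `{v} ∪ D \ {d}`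
would make `v` adjacent to `w`, so `d` has a private neighbour `p ∈ G_v`; `p` is complete to
`N(v)`, hence adjacent to `w`, and `d, p, w` is a triangle in `G_v`.
-/

def LocallyW2 (G : SimpleGraph V) : Prop :=
  ∀ v : V, ∀ C : (G.induce (GDel G {v})).ConnectedComponent,
    (∃ x y : GDel G {v}, x ∈ C.supp ∧ y ∈ C.supp ∧ G.Adj x.1 y.1) →
      W2On G (Subtype.val '' C.supp)

section

variable {G : SimpleGraph V} {W W' : Set V}

theorem mem_GDel_singleton {v x : V} : x ∈ GDel G {v} ↔ x ≠ v ∧ ¬ G.Adj v x := by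
  simp [GDel, nbhd]

theorem GDel_singleton_subset (v : V) : GDel G {v} ⊆ univ \ {v} :=
  fun _ hx => ⟨trivial, (mem_GDel_singleton.1 hx).1⟩

theorem IsIndepOn.mono {S : Set V} (h : IsIndepOn G W S) (hW : W ⊆ W') : IsIndepOn G W' S :=
  ⟨h.1.trans hW, h.2⟩

theorem IsIndepOn.subset {S S' : Set V} (h : IsIndepOn G W S) (hS : S' ⊆ S) :
    IsIndepOn G W S' :=
  ⟨hS.trans h.1, fun _ hx _ hy => h.2 (hS hx) (hS hy)⟩

theorem isIndepOn_insert_iff {a : V} {S : Set V} :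
    IsIndepOn G W (insert a S) ↔ a ∈ W ∧ IsIndepOn G W S ∧ ∀ s ∈ S, ¬ G.Adj a s := by
  refine ⟨fun h => ⟨h.1 (mem_insert _ _), h.subset (subset_insert _ _),
    fun s hs => h.2 (mem_insert _ _) (mem_insert_of_mem _ hs)⟩, ?_⟩
  rintro ⟨ha, hS, haS⟩
  refine ⟨insert_subset ha hS.1, ?_⟩
  rintro x (rfl | hx) y (rfl | hy)
  exacts [G.irrefl, haS y hy, fun h => haS x hx h.symm, hS.2 hx hy]

theorem maxIndepOn_iff {S : Finset V} :
    MaxIndepOn G W S ↔ IsIndepOn G W S ∧ ∀ y ∈ W, y ∉ S → ∃ s ∈ S, G.Adj y s := by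
  refine and_congr_right fun hS => forall₂_congr fun y hy => imp_congr_right fun _ => ?_
  simp [isIndepOn_insert_iff, hy, hS]

theorem MaxIndepOn.of_subset {S : Finset V} (h : MaxIndepOn G W S) (hW : W' ⊆ W)
    (hS : ↑S ⊆ W') : MaxIndepOn G W' S :=
  ⟨⟨hS, h.1.2⟩, fun y hy hyS hind => h.2 y (hW hy) hyS (hind.mono hW)⟩

theorem MaxIndepOn.univ_of_exists_adj {v : V} {S : Finset V} (h : MaxIndepOn G (univ \ {v}) S)
    (hv : ∃ s ∈ S, G.Adj v s) : MaxIndepOn G univ S := by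
  refine maxIndepOn_iff.2 ⟨h.1.mono (subset_univ _), fun y _ hyS => ?_⟩
  rcases eq_or_ne y v with rfl | hyv
  · exact hv
  · exact (maxIndepOn_iff.1 h).2 y ⟨trivial, hyv⟩ hyS

theorem MaxIndepOn.insert_of_GDel [DecidableEq V] {v : V} {S : Finset V}
    (h : MaxIndepOn G (GDel G {v}) S) : MaxIndepOn G univ (insert v S) := by
  have hSv : ∀ s ∈ S, s ≠ v ∧ ¬ G.Adj v s := fun s hs => mem_GDel_singleton.1 (h.1.1 hs)
  refine maxIndepOn_iff.2 ⟨?_, fun y _ hy => ?_⟩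
  · rw [Finset.coe_insert, isIndepOn_insert_iff]
    exact ⟨trivial, h.1.mono (subset_univ _), fun s hs => (hSv s hs).2⟩
  · rw [Finset.mem_insert, not_or] at hy
    by_cases hvy : G.Adj v y
    · exact ⟨v, Finset.mem_insert_self _ _, hvy.symm⟩
    · obtain ⟨s, hs, hys⟩ := (maxIndepOn_iff.1 h).2 y (mem_GDel_singleton.2 ⟨hy.1, hvy⟩) hy.2
      exact ⟨s, Finset.mem_insert_of_mem hs, hys⟩

theorem nonempty_card_isIndepOn :
    {n | ∃ S : Finset V, IsIndepOn G W ↑S ∧ S.card = n}.Nonempty :=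
  ⟨0, ∅, ⟨by simp, by simp⟩, rfl⟩

theorem mem_image_supp_of_adj {W : Set V}
    {C : (G.induce W).ConnectedComponent} {a b : V} (ha : a ∈ Subtype.val '' C.supp)
    (hb : b ∈ W) (hab : G.Adj a b) : b ∈ Subtype.val '' C.supp := by
  obtain ⟨a, haC, rfl⟩ := ha
  exact ⟨⟨b, hb⟩, C.mem_supp_of_adj_mem_supp haC hab, rfl⟩

theorem exists_not_forall_adj_of_not_isJoin (hG : ¬ IsJoin G) {v : V}
    (hv : ∃ u, G.Adj v u) : ∃ w ∈ GDel G {v}, ¬ ∀ u, G.Adj v u → G.Adj w u := by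
  by_contra! h
  refine hG ⟨{x | G.Adj v x}, {x | G.Adj v x}ᶜ, hv, ⟨v, G.irrefl⟩, disjoint_compl_right,
    union_compl_self _, fun x hx y hy => ?_⟩
  rcases eq_or_ne y v with rfl | hyv
  · exact hx.symm
  · exact (h y (mem_GDel_singleton.2 ⟨hyv, hy⟩) x hx).symm

variable [Finite V]

theorem bddAbove_card_isIndepOn :
    BddAbove {n | ∃ S : Finset V, IsIndepOn G W ↑S ∧ S.card = n} := by
  have := Fintype.ofFinite V
  exact ⟨Fintype.card V, by rintro _ ⟨S, -, rfl⟩; exact S.card_le_univ⟩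

theorem card_le_indepNumOn {S : Finset V} (h : IsIndepOn G W S) : S.card ≤ indepNumOn G W :=
  le_csSup bddAbove_card_isIndepOn ⟨S, h, rfl⟩

theorem exists_isIndepOn_card_eq_indepNumOn :
    ∃ S : Finset V, IsIndepOn G W S ∧ S.card = indepNumOn G W :=
  Nat.sSup_mem nonempty_card_isIndepOn bddAbove_card_isIndepOn

theorem exists_maxIndepOn_superset {S : Finset V} (h : IsIndepOn G W S) :
    ∃ T, S ⊆ T ∧ MaxIndepOn G W T := by
  classical
  obtain ⟨T, ⟨hST, hT⟩, hmax⟩ :=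
    (Set.toFinite {T : Finset V | S ⊆ T ∧ IsIndepOn G W T}).exists_maximal ⟨S, subset_rfl, h⟩
  refine ⟨T, hST, hT, fun y _ hyT hind => hyT ?_⟩
  have hle : insert y T ⊆ T :=
    hmax (show S ⊆ insert y T ∧ IsIndepOn G W ↑(insert y T) from
      ⟨hST.trans (Finset.subset_insert y T), by rwa [Finset.coe_insert]⟩) (Finset.subset_insert y T)
  exact hle (Finset.mem_insert_self y T)

theorem indepNumOn_eq_of_forall_maxIndepOn {n : ℕ}
    (h : ∀ S : Finset V, MaxIndepOn G W S → S.card = n) : indepNumOn G W = n := by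
  obtain ⟨S, hS, hcard⟩ := exists_isIndepOn_card_eq_indepNumOn (G := G) (W := W)
  obtain ⟨T, hST, hT⟩ := exists_maxIndepOn_superset hS
  have := Finset.card_le_card hST
  have := card_le_indepNumOn hT.1
  have := h T hT
  omega

/-- `x` is a shedding vertex of `G[U]`. -/
theorem exists_adj_forall_not_adj_of_wellCoveredOn_diff {U : Set V} {x : V} (hx : x ∈ U)
    (hwc : WellCoveredOn G (U \ {x})) (hα : indepNumOn G U ≤ indepNumOn G (U \ {x}))
    {A : Finset V} (hA : IsIndepOn G (U ∩ GDel G {x}) A) :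
    ∃ t ∈ U, G.Adj x t ∧ ∀ a ∈ A, ¬ G.Adj t a := by
  classical
  by_contra! hdom
  obtain ⟨B, hAB, hB⟩ := exists_maxIndepOn_superset hA
  have hBx : ∀ b ∈ B, b ∈ U ∧ b ≠ x ∧ ¬ G.Adj x b := fun b hb =>
    ⟨(hB.1.1 hb).1, mem_GDel_singleton.1 (hB.1.1 hb).2⟩
  have hBmax : MaxIndepOn G (U \ {x}) B := by
    refine maxIndepOn_iff.2 ⟨⟨fun b hb => ⟨(hBx b hb).1, (hBx b hb).2.1⟩, hB.1.2⟩,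
      fun y ⟨hyU, hyx⟩ hyB => ?_⟩
    by_cases hxy : G.Adj x y
    · obtain ⟨a, ha, hya⟩ := hdom y hyU hxy
      exact ⟨a, hAB ha, hya⟩
    · exact (maxIndepOn_iff.1 hB).2 y ⟨hyU, mem_GDel_singleton.2 ⟨hyx, hxy⟩⟩ hyB
  have hxB : IsIndepOn G U ↑(insert x B) := by
    rw [Finset.coe_insert, isIndepOn_insert_iff]
    exact ⟨hx, ⟨fun b hb => (hBx b hb).1, hB.1.2⟩, fun b hb => (hBx b hb).2.2⟩
  have hcard := card_le_indepNumOn hxB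
  rw [Finset.card_insert_of_notMem fun h => (hBx x h).2.1 rfl, hwc B hBmax] at hcard
  omega

end

namespace LocallyW2

variable [Finite V] {G : SimpleGraph V} (hG : LocallyW2 G)
include hG

theorem adj_of_dominating {x : V} {E : Finset V} (hE : IsIndepOn G (GDel G {x}) E)
    (hdom : ∀ u, G.Adj x u → ∃ d ∈ E, G.Adj u d) {s u : V} (hs : s ∈ E) (hxu : G.Adj x u) :
    G.Adj s u := by
  classical
  by_contra hsu
  obtain ⟨hsx, hxs⟩ := mem_GDel_singleton.1 (hE.1 hs)
  have hx : x ∈ GDel G {s} := mem_GDel_singleton.2 ⟨hsx.symm, fun h => hxs h.symm⟩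
  have hu : u ∈ GDel G {s} := mem_GDel_singleton.2 ⟨by rintro rfl; exact hxs hxu, hsu⟩
  set C := (G.induce (GDel G {s})).connectedComponentMk ⟨x, hx⟩
  set U := Subtype.val '' C.supp
  have hxU : x ∈ U := ⟨_, rfl, rfl⟩
  have hU : W2On G U := hG s C ⟨⟨x, hx⟩, ⟨u, hu⟩, rfl, C.mem_supp_of_adj_mem_supp rfl hxu, hxu⟩
  have hA : IsIndepOn G (U ∩ GDel G {x}) ↑(E.filter (· ∈ U)) :=
    ⟨fun a ha => ⟨(Finset.mem_filter.1 ha).2, hE.1 (Finset.mem_filter.1 ha).1⟩,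
      (hE.subset (Finset.coe_subset.2 (Finset.filter_subset _ E))).2⟩
  obtain ⟨t, htU, hxt, ht⟩ := exists_adj_forall_not_adj_of_wellCoveredOn_diff hxU
    (hU.2.2 x hxU).1 (hU.2.2 x hxU).2.ge hA
  obtain ⟨d, hdE, htd⟩ := hdom t hxt
  have hts : t ∈ GDel G {s} := by
    obtain ⟨t, -, rfl⟩ := htU
    exact t.2
  have hds : d ≠ s := by
    rintro rfl
    exact (mem_GDel_singleton.1 hts).2 htd.symm
  have hd : d ∈ GDel G {s} := mem_GDel_singleton.2 ⟨hds, hE.2 hs hdE⟩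
  exact ht d (Finset.mem_filter.2 ⟨hdE, mem_image_supp_of_adj htU hd htd⟩) htd

theorem adj_of_forall_adj {v w d : V} (hw : w ∈ GDel G {v})
    (hwN : ¬ ∀ u, G.Adj v u → G.Adj w u) (hd : d ∈ GDel G {v})
    (hdN : ∀ u, G.Adj v u → G.Adj d u) : G.Adj w d := by
  classical
  by_contra hwd
  refine hwN fun u hu => hG.adj_of_dominating (E := {w, d}) ?_
    (fun u hu => ⟨d, by simp, (hdN u hu).symm⟩) (by simp) hu
  rw [Finset.coe_insert, Finset.coe_singleton, isIndepOn_insert_iff]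
  exact ⟨hw, ⟨singleton_subset_iff.2 hd, by simp⟩, by simpa using hwd⟩

theorem exists_private_neighbor [DecidableEq V] {v w d : V} {D : Finset V}
    (hD : IsIndepOn G (GDel G {v}) D) (hd : d ∈ D) (hw : w ∈ GDel G {v}) (hwd : G.Adj w d) :
    ∃ p ∈ GDel G {v}, G.Adj d p ∧ ∀ d' ∈ D, G.Adj p d' → d' = d := by
  by_contra! hpriv
  obtain ⟨hdv, hvd⟩ := mem_GDel_singleton.1 (hD.1 hd)
  refine (mem_GDel_singleton.1 hw).2 (hG.adj_of_dominating (x := d)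
    (E := insert v (D.erase d)) ?_ (fun u hu => ?_) (Finset.mem_insert_self _ _) hwd.symm)
  · rw [Finset.coe_insert, isIndepOn_insert_iff, Finset.coe_erase]
    refine ⟨mem_GDel_singleton.2 ⟨hdv.symm, fun h => hvd h.symm⟩,
      ⟨fun e ⟨he, hed⟩ => mem_GDel_singleton.2 ⟨hed, hD.2 hd he⟩, (hD.subset sdiff_subset).2⟩,
      fun e ⟨he, _⟩ => (mem_GDel_singleton.1 (hD.1 he)).2⟩
  · by_cases hvu : G.Adj v u
    · exact ⟨v, Finset.mem_insert_self _ _, hvu.symm⟩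
    · obtain ⟨d', hd', hud', hd'd⟩ :=
        hpriv u (mem_GDel_singleton.2 ⟨by rintro rfl; exact hvd hu.symm, hvu⟩) hu
      exact ⟨d', Finset.mem_insert_of_mem (Finset.mem_erase.2 ⟨hd'd, hd'⟩), hud'⟩

theorem not_dominating (hloc : LocallyTriangleFree G) (hjoin : ¬ IsJoin G) {v : V}
    (hv : ∃ u, G.Adj v u) {D : Finset V} (hD : IsIndepOn G (GDel G {v}) D) (hcard : 2 ≤ D.card) :
    ¬ ∀ u, G.Adj v u → ∃ d ∈ D, G.Adj u d := by
  classical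
  intro hdom
  have hDN : ∀ d ∈ D, ∀ u, G.Adj v u → G.Adj d u := fun d hd u hu =>
    hG.adj_of_dominating hD hdom hd hu
  obtain ⟨w, hw, hwN⟩ := exists_not_forall_adj_of_not_isJoin hjoin hv
  obtain ⟨d, hd⟩ : D.Nonempty := Finset.card_pos.1 (by omega)
  have hwd : G.Adj w d := hG.adj_of_forall_adj hw hwN (hD.1 hd) (hDN d hd)
  obtain ⟨p, hp, hdp, hpD⟩ := hG.exists_private_neighbor hD hd hw hwd
  obtain ⟨d', hd', hd'd⟩ := D.exists_mem_ne (by omega) d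
  have hpN : ∀ u, G.Adj v u → G.Adj p u := by
    refine fun u hu => hG.adj_of_dominating (E := insert p (D.erase d)) ?_
      (fun u hu => ⟨d', Finset.mem_insert_of_mem (Finset.mem_erase.2 ⟨hd'd, hd'⟩),
        (hDN d' hd' u hu).symm⟩) (Finset.mem_insert_self _ _) hu
    rw [Finset.coe_insert, isIndepOn_insert_iff, Finset.coe_erase]
    exact ⟨hp, hD.subset sdiff_subset, fun e ⟨he, hed⟩ hpe => hed (hpD e he hpe)⟩
  exact hloc v d (hD.1 hd) p hp w hw
    ⟨hdp, (hG.adj_of_forall_adj hw hwN hp hpN).symm, hwd.symm⟩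

theorem card_eq_indepNum_of_maxIndepOn_diff (hwc : WellCovered G) (hα : 3 ≤ indepNum G)
    (hloc : LocallyTriangleFree G) (hjoin : ¬ IsJoin G) {v : V} (hv : ∃ u, G.Adj v u)
    {T : Finset V} (hT : MaxIndepOn G (univ \ {v}) T) : T.card = indepNum G := by
  classical
  by_cases hvT : ∃ t ∈ T, G.Adj v t
  · exact hwc T (hT.univ_of_exists_adj hvT)
  push Not at hvT
  have hTv : IsIndepOn G (GDel G {v}) T :=
    ⟨fun t ht => mem_GDel_singleton.2 ⟨(hT.1.1 ht).2, hvT t ht⟩, hT.1.2⟩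
  have hcard : (insert v T).card = indepNum G :=
    hwc _ (hT.of_subset (GDel_singleton_subset v) hTv.1).insert_of_GDel
  rw [Finset.card_insert_of_notMem fun h => (hT.1.1 h).2 rfl] at hcard
  refine absurd (fun u hu => ?_) (hG.not_dominating hloc hjoin hv hTv (by omega))
  exact (maxIndepOn_iff.1 hT).2 u ⟨trivial, (G.ne_of_adj hu).symm⟩ fun h => hvT u h hu

end LocallyW2

/-- If `G` is connected, well-covered, locally triangle-free, `α(G) ≥ 3`, not a
join of two proper subgraphs, and every nontrivial connected component of `G_v`
is in `W₂` for every vertex `v`, then `G` is in `W₂`. -/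
theorem stmt_18 [Fintype V] (G : SimpleGraph V) (hconn : G.Connected)
    (hwc : WellCovered G) (hloc : LocallyTriangleFree G) (hα : 3 ≤ indepNum G)
    (hjoin : ¬ IsJoin G)
    (hcomp : ∀ v : V, ∀ C : (G.induce (GDel G {v})).ConnectedComponent,
      (∃ x y : GDel G {v}, x ∈ C.supp ∧ y ∈ C.supp ∧ G.Adj x.1 y.1) →
        W2On G (Subtype.val '' C.supp)) :
    W2 G := by
  have hG : LocallyW2 G := hcomp
  have : Nontrivial V := by
    obtain ⟨S, -, hS⟩ := exists_isIndepOn_card_eq_indepNumOn (G := G) (W := univ)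
    exact Fintype.one_lt_card_iff_nontrivial.1
      (lt_of_lt_of_le (by omega) ((hα.trans_eq hS.symm).trans S.card_le_univ))
  have hadj : ∀ v, ∃ u, G.Adj v u := hconn.preconnected.exists_adj_of_nontrivial
  have hcard : ∀ v, ∀ T, MaxIndepOn G (univ \ {v}) T → T.card = indepNum G := fun v _ hT =>
    hG.card_eq_indepNum_of_maxIndepOn_diff hwc hα hloc hjoin (hadj v) hT
  refine ⟨fun v _ => (hadj v).imp fun u hu => ⟨trivial, hu⟩, hwc, fun v _ => ?_⟩
  have hαv := indepNumOn_eq_of_forall_maxIndepOn (hcard v)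
  exact ⟨fun T hT => hαv ▸ hcard v T hT, hαv⟩
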